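/- arXiv:2109.07534 — 4 statements merged into one kernel-verified Lean document; each statement's English description precedes it below -/
import Mathlib

section
/- Let (α_i) be a sequence of nonnegative reals and (c_i) reals, not all zero, such that Σ c_i² s^{2α_i} < ∞ for all s in an interval (0,R). Define U(s) = (Σ_i c_i² α_i s^{2α_i}) / (Σ_i c_i² s^{2α_i}) for s ∈ (0,R). Then U is non-decreasing on (0,R). -/
open Real

private lemma key_aux (s t a b ci cj : ℝ) (hs : 0 < s) (hst : s ≤ t)
    (hba : b ≤ a) :
    (ci ^ 2 * a * s ^ (2 * a)) * (cj ^ 2 * t ^ (2 * b)) +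
      (cj ^ 2 * b * s ^ (2 * b)) * (ci ^ 2 * t ^ (2 * a)) ≤
    (ci ^ 2 * a * t ^ (2 * a)) * (cj ^ 2 * s ^ (2 * b)) +
      (cj ^ 2 * b * t ^ (2 * b)) * (ci ^ 2 * s ^ (2 * a)) := by
  have ht : 0 < t := lt_of_lt_of_le hs hst
  have h1 : s ^ (2 * a - 2 * b) ≤ t ^ (2 * a - 2 * b) :=
    Real.rpow_le_rpow hs.le hst (by linarith)
  have e1 : s ^ (2 * a - 2 * b) * s ^ (2 * b) = s ^ (2 * a) := by
    rw [← Real.rpow_add hs]; ring_nf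
  have e2 : t ^ (2 * a - 2 * b) * t ^ (2 * b) = t ^ (2 * a) := by
    rw [← Real.rpow_add ht]; ring_nf
  have hX : s ^ (2 * a) * t ^ (2 * b) ≤ t ^ (2 * a) * s ^ (2 * b) := by
    calc s ^ (2 * a) * t ^ (2 * b)
        = s ^ (2 * a - 2 * b) * (s ^ (2 * b) * t ^ (2 * b)) := by rw [← e1]; ring
      _ ≤ t ^ (2 * a - 2 * b) * (s ^ (2 * b) * t ^ (2 * b)) := by
          apply mul_le_mul_of_nonneg_right h1
          exact mul_nonneg (Real.rpow_nonneg hs.le _) (Real.rpow_nonneg ht.le _)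
      _ = t ^ (2 * a) * s ^ (2 * b) := by rw [← e2]; ring
  nlinarith [mul_nonneg (mul_nonneg (mul_nonneg (sq_nonneg ci) (sq_nonneg cj))
      (sub_nonneg.2 hba)) (sub_nonneg.2 hX)]

private lemma key (s t a b ci cj : ℝ) (hs : 0 < s) (hst : s ≤ t) :
    (ci ^ 2 * a * s ^ (2 * a)) * (cj ^ 2 * t ^ (2 * b)) +
      (cj ^ 2 * b * s ^ (2 * b)) * (ci ^ 2 * t ^ (2 * a)) ≤
    (ci ^ 2 * a * t ^ (2 * a)) * (cj ^ 2 * s ^ (2 * b)) +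
      (cj ^ 2 * b * t ^ (2 * b)) * (ci ^ 2 * s ^ (2 * a)) := by
  rcases le_total b a with h | h
  · exact key_aux s t a b ci cj hs hst h
  · have := key_aux s t b a cj ci hs hst h
    linarith

set_option maxHeartbeats 1000000 in
theorem frequency_monotone (R : ℝ) (hR : 0 < R) (α : ℕ → ℝ) (hα : ∀ i, 0 ≤ α i)
    (c : ℕ → ℝ) (hc : ∃ i, c i ≠ 0)
    (hsumI : ∀ s ∈ Set.Ioo (0 : ℝ) R, Summable (fun i => (c i) ^ 2 * s ^ (2 * α i)))
    (hsumD : ∀ s ∈ Set.Ioo (0 : ℝ) R, Summable (fun i => (c i) ^ 2 * α i * s ^ (2 * α i))) :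
    MonotoneOn
      (fun s => (∑' i, (c i) ^ 2 * α i * s ^ (2 * α i)) / (∑' i, (c i) ^ 2 * s ^ (2 * α i)))
      (Set.Ioo 0 R) := by
  intro s hs t ht hst
  obtain ⟨i0, hi0⟩ := hc
  have hspos : 0 < s := hs.1
  have htpos : 0 < t := ht.1
  -- nonnegativity of terms
  have hfs : ∀ i, 0 ≤ (c i) ^ 2 * s ^ (2 * α i) := fun i =>
    mul_nonneg (sq_nonneg _) (Real.rpow_nonneg hspos.le _)
  have hft : ∀ i, 0 ≤ (c i) ^ 2 * t ^ (2 * α i) := fun i =>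
    mul_nonneg (sq_nonneg _) (Real.rpow_nonneg htpos.le _)
  have hds : ∀ i, 0 ≤ (c i) ^ 2 * α i * s ^ (2 * α i) := fun i =>
    mul_nonneg (mul_nonneg (sq_nonneg _) (hα i)) (Real.rpow_nonneg hspos.le _)
  have hdt : ∀ i, 0 ≤ (c i) ^ 2 * α i * t ^ (2 * α i) := fun i =>
    mul_nonneg (mul_nonneg (sq_nonneg _) (hα i)) (Real.rpow_nonneg htpos.le _)
  have hIs := hsumI s hs
  have hIt := hsumI t ht
  have hDs := hsumD s hs
  have hDt := hsumD t ht
  -- positivity of denominators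
  have hc2 : 0 < (c i0) ^ 2 := (sq_nonneg _).lt_of_ne (Ne.symm (pow_ne_zero 2 hi0))
  have hIspos : 0 < ∑' i, (c i) ^ 2 * s ^ (2 * α i) :=
    Summable.tsum_pos hIs hfs i0 (mul_pos hc2 (Real.rpow_pos_of_pos hspos _))
  have hItpos : 0 < ∑' i, (c i) ^ 2 * t ^ (2 * α i) :=
    Summable.tsum_pos hIt hft i0 (mul_pos hc2 (Real.rpow_pos_of_pos htpos _))
  simp only
  rw [div_le_div_iff₀ hIspos hItpos]
  -- reduce to a double-sum inequality
  have hprod1 : Summable (fun p : ℕ × ℕ =>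
      ((c p.1) ^ 2 * α p.1 * s ^ (2 * α p.1)) * ((c p.2) ^ 2 * t ^ (2 * α p.2))) :=
    hDs.mul_of_nonneg hIt hds hft
  have hprod2 : Summable (fun p : ℕ × ℕ =>
      ((c p.1) ^ 2 * α p.1 * t ^ (2 * α p.1)) * ((c p.2) ^ 2 * s ^ (2 * α p.2))) :=
    hDt.mul_of_nonneg hIs hdt hfs
  rw [Summable.tsum_mul_tsum hDs hIt hprod1, Summable.tsum_mul_tsum hDt hIs hprod2]
  set F : ℕ × ℕ → ℝ := fun p =>
    ((c p.1) ^ 2 * α p.1 * s ^ (2 * α p.1)) * ((c p.2) ^ 2 * t ^ (2 * α p.2)) with hF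
  set G : ℕ × ℕ → ℝ := fun p =>
    ((c p.1) ^ 2 * α p.1 * t ^ (2 * α p.1)) * ((c p.2) ^ 2 * s ^ (2 * α p.2)) with hG
  have hFswap : Summable (F ∘ Prod.swap) := by
    exact ((Equiv.prodComm ℕ ℕ).summable_iff).2 hprod1
  have hGswap : Summable (G ∘ Prod.swap) := by
    exact ((Equiv.prodComm ℕ ℕ).summable_iff).2 hprod2
  have hswapF : ∑' p : ℕ × ℕ, F (Prod.swap p) = ∑' p, F p :=
    (Equiv.prodComm ℕ ℕ).tsum_eq F
  have hswapG : ∑' p : ℕ × ℕ, G (Prod.swap p) = ∑' p, G p :=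
    (Equiv.prodComm ℕ ℕ).tsum_eq G
  have hpt : ∀ p : ℕ × ℕ, F p + F (Prod.swap p) ≤ G p + G (Prod.swap p) := by
    intro ⟨i, j⟩
    simpa [hF, hG] using key s t (α i) (α j) (c i) (c j) hspos hst
  have hsum_le : ∑' p, (F p + F (Prod.swap p)) ≤ ∑' p, (G p + G (Prod.swap p)) :=
    Summable.tsum_le_tsum hpt (hprod1.add hFswap) (hprod2.add hGswap)
  have hFswap' : Summable (fun p : ℕ × ℕ => F (Prod.swap p)) := hFswap
  have hGswap' : Summable (fun p : ℕ × ℕ => G (Prod.swap p)) := hGswap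
  have eF : ∑' p, (F p + F (Prod.swap p)) = 2 * ∑' p, F p := by
    rw [Summable.tsum_add hprod1 hFswap', hswapF]; ring
  have eG : ∑' p, (G p + G (Prod.swap p)) = 2 * ∑' p, G p := by
    rw [Summable.tsum_add hprod2 hGswap', hswapG]; ring
  rw [eF, eG] at hsum_le
  linarith
end

section
/- Let β > 0, T > 0, and J : (0,∞) → (0,∞). Assume the three-circles implication: for every r ≥ T, if J(r) ≤ 2^{2β}·J(r/2) then J(r/2) ≤ 2^{2β}·J(r/4). Assume also there is a sequence r_i → ∞ such that for all sufficiently large i and every s ∈ [1/2, 1], J(s·r_i) ≤ 2^{2β}·J(s·r_i/2). Then J(s) ≤ 2^{2β}·J(s/2) holds for every s ≥ T. -/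
theorem three_circles_propagation (T β : ℝ) (hT : 0 < T) (hβ : 0 < β) (J : ℝ → ℝ)
    (hpos : ∀ s : ℝ, 0 < s → 0 < J s)
    (hthree : ∀ r : ℝ, T ≤ r →
      (J r ≤ 2 ^ (2 * β) * J (r / 2) → J (r / 2) ≤ 2 ^ (2 * β) * J (r / 4)))
    (r : ℕ → ℝ) (hr : Filter.Tendsto r Filter.atTop Filter.atTop)
    (hseq : ∃ i₀ : ℕ, ∀ i ≥ i₀, ∀ s ∈ Set.Icc (1 / 2 : ℝ) 1,
      J (s * r i) ≤ 2 ^ (2 * β) * J (s * r i / 2)) :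
    ∀ s : ℝ, T ≤ s → J s ≤ 2 ^ (2 * β) * J (s / 2) := by
  obtain ⟨i₀, hi₀⟩ := hseq
  intro s hs
  have hs0 : 0 < s := lt_of_lt_of_le hT hs
  obtain ⟨i, hi1, hi2⟩ :=
    ((hr.eventually_ge_atTop s).and (Filter.eventually_ge_atTop i₀)).exists
  have hri : 0 < r i := lt_of_lt_of_le hs0 hi1
  have hx1 : (1 : ℝ) ≤ r i / s := (one_le_div hs0).2 hi1
  obtain ⟨n, hn1, hn2⟩ := exists_mem_Ico_zpow (x := r i / s) (y := 2)
    (lt_of_lt_of_le one_pos hx1) one_lt_two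
  have hn0 : 0 ≤ n := by
    by_contra h
    push_neg at h
    have : (2 : ℝ) ^ (n + 1) ≤ 1 :=
      zpow_le_one_of_nonpos₀ one_le_two (by omega)
    linarith
  set m : ℕ := n.toNat with hm
  have hmz : (m : ℤ) = n := Int.toNat_of_nonneg hn0
  have hlow : s * 2 ^ m ≤ r i := by
    have : (2 : ℝ) ^ n ≤ r i / s := hn1
    rw [← hmz, zpow_natCast] at this
    calc s * 2 ^ m ≤ s * (r i / s) := by
          exact mul_le_mul_of_nonneg_left this hs0.le
      _ = r i := by field_simp
  have hhigh : r i < s * 2 ^ m * 2 := by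
    have : r i / s < (2 : ℝ) ^ (n + 1) := hn2
    have h2 : r i / s < (2 : ℝ) ^ m * 2 := by
      rw [← hmz] at this
      rw [zpow_add_one₀ (by norm_num : (2:ℝ) ≠ 0), zpow_natCast] at this
      exact this
    calc r i = s * (r i / s) := by field_simp
      _ < s * ((2 : ℝ) ^ m * 2) := by exact mul_lt_mul_of_pos_left h2 hs0
      _ = s * 2 ^ m * 2 := by ring
  -- apply hseq at s' = s * 2^m / r i
  have hs' : s * 2 ^ m / r i ∈ Set.Icc (1 / 2 : ℝ) 1 := by
    constructor
    · rw [le_div_iff₀ hri]; linarith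
    · rw [div_le_one hri]; exact hlow
  have hstart : J (s * 2 ^ m) ≤ 2 ^ (2 * β) * J (s * 2 ^ m / 2) := by
    have := hi₀ i hi2 _ hs'
    rw [div_mul_cancel₀ _ hri.ne'] at this
    exact this
  -- downward induction
  clear hs' hlow hhigh hn1 hn2 hmz hm hn0 hi₀ hi1 hi2 hri hx1
  clear_value m
  induction m with
  | zero => simpa using hstart
  | succ k ih =>
    apply ih
    have hTk : T ≤ s * 2 ^ (k + 1) := by
      have h1 : (1 : ℝ) ≤ 2 ^ (k + 1) := one_le_pow₀ (by norm_num)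
      nlinarith
    have := hthree (s * 2 ^ (k + 1)) hTk hstart
    have e1 : s * 2 ^ (k + 1) / 2 = s * 2 ^ k := by ring
    have e2 : s * 2 ^ (k + 1) / 4 = s * 2 ^ k / 2 := by ring
    rwa [e1, e2] at this
end

section
/- Let f : [0,∞) → (0,∞) be non-decreasing with f(s) ≤ C(1 + s^{d}) for all s ≥ 0, where C > 0 and d > 0. Then for every N ≥ 2 there exist infinitely many positive integers m such that f(N^{m+1}) ≤ 2·N^{d}·f(N^{m}). -/
theorem pigeonhole_doubling_scales (C d : ℝ) (hC : 0 < C) (hd : 0 < d) (f : ℝ → ℝ)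
    (hmono : MonotoneOn f (Set.Ici 0)) (hpos : ∀ s : ℝ, 0 ≤ s → 0 < f s)
    (hbound : ∀ s : ℝ, 0 ≤ s → f s ≤ C * (1 + s ^ d)) :
    ∀ N : ℝ, 2 ≤ N → ∀ m₀ : ℕ, ∃ m : ℕ, m₀ ≤ m ∧ 0 < m ∧
      f (N ^ (m + 1)) ≤ 2 * N ^ d * f (N ^ m) := by
  intro N hN m₀
  by_contra hcon
  push_neg at hcon
  have hN0 : (0 : ℝ) < N := by linarith
  have hN1 : (1 : ℝ) ≤ N := by linarith
  have hNd1 : (1 : ℝ) ≤ N ^ d := Real.one_le_rpow hN1 hd.le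
  have hNd0 : (0 : ℝ) < N ^ d := by linarith
  set m₁ := max m₀ 1 with hm₁
  have hm₁pos : 0 < m₁ := lt_of_lt_of_le one_pos (le_max_right _ _)
  have hpow_nonneg : ∀ k : ℕ, (0 : ℝ) ≤ N ^ k := fun k => pow_nonneg hN0.le k
  have hfposm : ∀ k : ℕ, 0 < f (N ^ k) := fun k => hpos _ (hpow_nonneg k)
  -- rpow of natural power
  have hrw : ∀ k : ℕ, ((N : ℝ) ^ k) ^ d = (N ^ d) ^ k := by
    intro k
    rw [← Real.rpow_natCast N k, ← Real.rpow_natCast (N ^ d) k,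
      ← Real.rpow_mul hN0.le, ← Real.rpow_mul hN0.le, mul_comm]
  have hNdk1 : ∀ k : ℕ, (1 : ℝ) ≤ (N ^ d) ^ k := fun k => one_le_pow₀ hNd1
  -- lower bound by induction
  have key : ∀ k : ℕ, 2 ^ k * (N ^ d) ^ k * f (N ^ m₁) ≤ f (N ^ (m₁ + k)) := by
    intro k
    induction k with
    | zero => simp
    | succ k ih =>
      have hstep := hcon (m₁ + k) (le_trans (le_max_left _ _) (Nat.le_add_right _ _))
        (Nat.lt_of_lt_of_le hm₁pos (Nat.le_add_right _ _))
      have h2 : 2 * N ^ d * (2 ^ k * (N ^ d) ^ k * f (N ^ m₁)) ≤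
          2 * N ^ d * f (N ^ (m₁ + k)) := by
        apply mul_le_mul_of_nonneg_left ih
        positivity
      calc 2 ^ (k + 1) * (N ^ d) ^ (k + 1) * f (N ^ m₁)
          = 2 * N ^ d * (2 ^ k * (N ^ d) ^ k * f (N ^ m₁)) := by ring
        _ ≤ 2 * N ^ d * f (N ^ (m₁ + k)) := h2
        _ ≤ f (N ^ (m₁ + k + 1)) := hstep.le
  -- upper bound
  have upper : ∀ k : ℕ, f (N ^ (m₁ + k)) ≤ 2 * C * (N ^ d) ^ m₁ * (N ^ d) ^ k := by
    intro k
    have h1 := hbound (N ^ (m₁ + k)) (hpow_nonneg _)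
    have h2 : ((N : ℝ) ^ (m₁ + k)) ^ d = (N ^ d) ^ m₁ * (N ^ d) ^ k := by
      rw [hrw, pow_add]
    calc f (N ^ (m₁ + k)) ≤ C * (1 + (N ^ (m₁ + k)) ^ d) := h1
      _ ≤ C * ((N ^ d) ^ m₁ * (N ^ d) ^ k + (N ^ d) ^ m₁ * (N ^ d) ^ k) := by
          apply mul_le_mul_of_nonneg_left _ hC.le
          rw [← h2]
          have := hNdk1 (m₁ + k)
          rw [← hrw] at this
          linarith
      _ = 2 * C * (N ^ d) ^ m₁ * (N ^ d) ^ k := by ring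
  -- combine and cancel
  have hcomb : ∀ k : ℕ, (2 : ℝ) ^ k ≤ 2 * C * (N ^ d) ^ m₁ / f (N ^ m₁) := by
    intro k
    have h := le_trans (key k) (upper k)
    have hk : (0 : ℝ) < (N ^ d) ^ k := pow_pos hNd0 k
    rw [le_div_iff₀ (hfposm m₁)]
    nlinarith [hfposm m₁, hk, mul_pos (hfposm m₁) hk]
  obtain ⟨k, hk⟩ := pow_unbounded_of_one_lt (2 * C * (N ^ d) ^ m₁ / f (N ^ m₁)) one_lt_two
  exact absurd (hcomb k) (not_le.mpr hk)
end

section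
/- Let n ≥ 2, α > 0, and suppose N(λ)/λ^{(n−1)/2} → n·ω_{n−1}·α/(2π)^{n−1} as λ → ∞, and that for every k > 0 outside a closed discrete set 𝒟 ⊂ [0,∞), h_k = N(k(k+n−2)). Then k^{1−n}·h_k → 2α/((n−1)!·ω_n) as k → ∞ (k ranging over positive reals), provided h is non-decreasing in k. -/
open Filter

/-- The Lebesgue volume of the unit ball in `ℝ^m`. -/
noncomputable def unitBallVol (m : ℕ) : ℝ :=
  Real.pi ^ ((m : ℝ) / 2) / Real.Gamma ((m : ℝ) / 2 + 1)

/-!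
Every interval `(k - 1, k)` and `(k, k + 1)` contains a point off the discrete set `D`, so the
monotonicity of `h` and `N` squeezes `h k` between `N (q (k - 1))` and `N (q (k + 1))`, where
`q k = k (k + n - 2)`. Since `q (k ± 1) ~ k²`, Weyl's law gives both bounds the asymptotics
`c k^(n-1)` with `c = n ω_{n-1} α / (2π)^(n-1)`, and Legendre's duplication formula turns `c` into
`2α / ((n-1)! ω_n)`.
-/

open Set Topology Real
open scoped Nat

theorem IsOpen.exists_mem_notMem_of_forall_not_accPt {X : Type*} [TopologicalSpace X]
    [PerfectSpace X] {U D : Set X} (hU : IsOpen U) (hne : U.Nonempty)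
    (hD : ∀ x, ¬AccPt x (𝓟 D)) : ∃ x ∈ U, x ∉ D := by
  by_contra! hUD
  obtain ⟨x, hx⟩ := hne
  exact hD x ((hU.preperfect x hx).mono (principal_mono.mpr hUD))

theorem unitBallVol_pos (m : ℕ) : 0 < unitBallVol m :=
  div_pos (rpow_pos_of_pos pi_pos _) (Gamma_pos_of_pos (by positivity))

/-- Legendre's duplication formula at `s = m / 2 + 1`. -/
theorem unitBallVol_mul_unitBallVol_succ (m : ℕ) :
    unitBallVol m * unitBallVol (m + 1) * (m + 1)! = 2 * (2 * π) ^ m := by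
  have hdup := Gamma_mul_Gamma_add_half ((m : ℝ) / 2 + 1)
  have hpi : π ^ ((m : ℝ) / 2) * π ^ (((m + 1 : ℕ) : ℝ) / 2) = π ^ m * √π := by
    rw [← rpow_add pi_pos, sqrt_eq_rpow, ← rpow_natCast, ← rpow_add pi_pos]
    push_cast; ring_nf
  have htwo : (2 : ℝ) ^ (1 - 2 * ((m : ℝ) / 2 + 1)) = ((2 : ℝ) ^ (m + 1))⁻¹ := by
    rw [← rpow_natCast, ← rpow_neg zero_le_two]; push_cast; ring_nf
  have hfac : Gamma (2 * ((m : ℝ) / 2 + 1)) = (m + 1)! := by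
    rw [show 2 * ((m : ℝ) / 2 + 1) = ((m + 1 : ℕ) : ℝ) + 1 by push_cast; ring,
      Gamma_nat_eq_factorial]
  have hGamma : Gamma (((m + 1 : ℕ) : ℝ) / 2 + 1) = Gamma ((m : ℝ) / 2 + 1 + 1 / 2) := by
    push_cast; ring_nf
  unfold unitBallVol
  rw [div_mul_div_comm, hpi, hGamma, hdup, hfac, htwo]
  have : √π ≠ 0 := by positivity
  field_simp
  ring

theorem weyl_constant_eq {n : ℕ} (hn : 1 ≤ n) (α : ℝ) :
    n * unitBallVol (n - 1) * α / (2 * π) ^ (n - 1) = 2 * α / ((n - 1)! * unitBallVol n) := by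
  obtain ⟨m, rfl⟩ := Nat.exists_eq_add_of_le' hn
  have key := unitBallVol_mul_unitBallVol_succ m
  have := unitBallVol_pos (m + 1)
  rw [Nat.factorial_succ] at key
  simp only [Nat.add_sub_cancel]
  rw [div_eq_div_iff (by positivity) (by positivity)]
  push_cast at key ⊢
  linear_combination α * key

theorem tendsto_mul_add_div_sq (a b : ℝ) :
    Tendsto (fun k : ℝ => (k + a) * (k + b) / k ^ 2) atTop (𝓝 1) := by
  have h : Tendsto (fun k : ℝ => (1 + a * k⁻¹) * (1 + b * k⁻¹)) atTop
      (𝓝 ((1 + a * 0) * (1 + b * 0))) :=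
    ((tendsto_inv_atTop_zero.const_mul a).const_add 1).mul
      ((tendsto_inv_atTop_zero.const_mul b).const_add 1)
  simp only [mul_zero, add_zero, mul_one] at h
  refine h.congr' ?_
  filter_upwards [eventually_ne_atTop 0] with k hk
  field_simp

theorem Filter.Tendsto.comp_div_pow_of_tendsto_div_sq {f u : ℝ → ℝ} {c : ℝ} {m : ℕ}
    (hf : Tendsto (fun x => f x / x ^ ((m : ℝ) / 2)) atTop (𝓝 c))
    (hu : Tendsto (fun k => u k / k ^ 2) atTop (𝓝 1)) :
    Tendsto (fun k => f (u k) / k ^ m) atTop (𝓝 c) := by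
  have hu_top : Tendsto u atTop atTop := by
    refine (Tendsto.pos_mul_atTop one_pos hu (tendsto_pow_atTop two_ne_zero)).congr' ?_
    filter_upwards [eventually_ne_atTop 0] with k hk
    field_simp
  have hpow : Tendsto (fun k => (u k / k ^ 2) ^ ((m : ℝ) / 2)) atTop (𝓝 1) := by
    simpa using hu.rpow_const (Or.inl one_ne_zero)
  simpa using ((hf.comp hu_top).mul hpow).congr' (by
    filter_upwards [hu_top.eventually_gt_atTop 0, eventually_gt_atTop 0] with k huk hk
    have hk2 : ((k ^ 2 : ℝ)) ^ ((m : ℝ) / 2) = k ^ m := by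
      rw [← rpow_natCast, ← rpow_mul hk.le, ← rpow_natCast]; ring_nf
    rw [Function.comp_apply, div_rpow huk.le (by positivity), hk2]
    field_simp)

theorem le_and_le_of_eq_comp_off_of_forall_not_accPt {N h : ℝ → ℕ} {q : ℝ → ℝ} {D : Set ℝ}
    (hN : Monotone N) (hh : MonotoneOn h (Ioi 0)) (hq : MonotoneOn q (Ici 0))
    (hD : ∀ x, ¬AccPt x (𝓟 D)) (heq : ∀ k, 0 < k → k ∉ D → h k = N (q k))
    {k : ℝ} (hk : 1 ≤ k) : N (q (k - 1)) ≤ h k ∧ h k ≤ N (q (k + 1)) := by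
  obtain ⟨k₁, ⟨hk₁l, hk₁r⟩, hk₁D⟩ :=
    isOpen_Ioo.exists_mem_notMem_of_forall_not_accPt (nonempty_Ioo.mpr (sub_one_lt k)) hD
  obtain ⟨k₂, ⟨hk₂l, hk₂r⟩, hk₂D⟩ :=
    isOpen_Ioo.exists_mem_notMem_of_forall_not_accPt (nonempty_Ioo.mpr (lt_add_one k)) hD
  have hk₁ : 0 < k₁ := by linarith
  have hk₂ : 0 < k₂ := by linarith
  constructor
  · calc N (q (k - 1)) ≤ N (q k₁) :=
          hN (hq (mem_Ici.mpr (by linarith)) (mem_Ici.mpr hk₁.le) hk₁l.le)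
      _ = h k₁ := (heq k₁ hk₁ hk₁D).symm
      _ ≤ h k := hh hk₁ (mem_Ioi.mpr (by linarith)) hk₁r.le
  · calc h k ≤ h k₂ := hh (mem_Ioi.mpr (by linarith)) hk₂ hk₂l.le
      _ = N (q k₂) := heq k₂ hk₂ hk₂D
      _ ≤ N (q (k + 1)) :=
          hN (hq (mem_Ici.mpr hk₂.le) (mem_Ici.mpr (by linarith)) hk₂r.le)

theorem dimension_asymptotics_general (n : ℕ) (hn : 2 ≤ n) (α : ℝ)
    (Nf : ℝ → ℕ) (h : ℝ → ℕ) (hNmono : Monotone Nf)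
    (hhmono : MonotoneOn h (Set.Ioi 0))
    (D : Set ℝ)
    (hDdisc : ∀ x : ℝ, ¬ AccPt x (Filter.principal D))
    (hweyl : Tendsto (fun lam : ℝ => (Nf lam : ℝ) / lam ^ (((n : ℝ) - 1) / 2)) atTop
      (nhds ((n : ℝ) * unitBallVol (n - 1) * α / (2 * Real.pi) ^ (n - 1))))
    (heq : ∀ k : ℝ, 0 < k → k ∉ D → h k = Nf (k * (k + n - 2))) :
    Tendsto (fun k : ℝ => (h k : ℝ) / k ^ (n - 1)) atTop
      (nhds (2 * α / ((Nat.factorial (n - 1) : ℝ) * unitBallVol n))) := by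
  set q : ℝ → ℝ := fun x => x * (x + n - 2)
  have hq : MonotoneOn q (Ici 0) := fun x hx y _ hxy => by
    have : (2 : ℝ) ≤ n := by exact_mod_cast hn
    simp only [q]
    nlinarith [mem_Ici.mp hx]
  rw [← Nat.cast_pred (by omega)] at hweyl
  have hshift (b : ℝ) := hweyl.comp_div_pow_of_tendsto_div_sq (f := fun x => (Nf x : ℝ))
    (u := fun k => q (k + b))
    ((tendsto_mul_add_div_sq b (b + n - 2)).congr fun k => by simp only [q]; ring_nf)
  rw [← weyl_constant_eq (by omega)]
  refine tendsto_of_tendsto_of_tendsto_of_le_of_le'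
    (by simpa only [← sub_eq_add_neg] using hshift (-1)) (hshift 1) ?_ ?_
  · filter_upwards [eventually_ge_atTop 1] with k hk
    gcongr
    exact (le_and_le_of_eq_comp_off_of_forall_not_accPt hNmono hhmono hq hDdisc heq hk).1
  · filter_upwards [eventually_ge_atTop 1] with k hk
    gcongr
    exact (le_and_le_of_eq_comp_off_of_forall_not_accPt hNmono hhmono hq hDdisc heq hk).2

theorem dimension_asymptotics (n : ℕ) (hn : 2 ≤ n) (α : ℝ) (hα : 0 < α)
    (Nf : ℝ → ℕ) (h : ℝ → ℕ) (hNmono : Monotone Nf)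
    (hhmono : MonotoneOn h (Set.Ioi 0))
    (D : Set ℝ) (hD0 : D ⊆ Set.Ici 0) (hDclosed : IsClosed D)
    (hDdisc : ∀ x : ℝ, ¬ AccPt x (Filter.principal D))
    (hweyl : Tendsto (fun lam : ℝ => (Nf lam : ℝ) / lam ^ (((n : ℝ) - 1) / 2)) atTop
      (nhds ((n : ℝ) * unitBallVol (n - 1) * α / (2 * Real.pi) ^ (n - 1))))
    (heq : ∀ k : ℝ, 0 < k → k ∉ D → h k = Nf (k * (k + n - 2))) :
    Tendsto (fun k : ℝ => (h k : ℝ) / k ^ (n - 1)) atTop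
      (nhds (2 * α / ((Nat.factorial (n - 1) : ℝ) * unitBallVol n))) :=
  dimension_asymptotics_general n hn α Nf h hNmono hhmono D hDdisc hweyl heq
end
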